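/- arXiv:math/0008174 — 6 statements merged into one kernel-verified Lean document; each statement's English description precedes it below -/
import Mathlib

section
/- Let g ∈ L²(ℝ), a > 0, b > 0, and let f ∈ L²(ℝ) be bounded and compactly supported. Then Σ_{k∈ℤ} ∫_ℝ | conj(f(t)) f(t−k/b) Σ_{n∈ℤ} g(t−na) conj(g(t−na−k/b)) | dt ≤ ∫_ℝ |f(t)|² Σ_{k∈ℤ} |G_k(t)| dt, where G_k(t) = Σ_{n∈ℤ} g(t−na) conj(g(t−na−k/b)). -/
open MeasureTheory Set
open scoped ENNReal NNReal

noncomputable section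

/-- The Gabor atom `E_{mb} T_{na} g`. -/
def gabor (g : ℝ → ℂ) (a b : ℝ) (m n : ℤ) : ℝ → ℂ :=
  fun t => Complex.exp (2 * (Real.pi : ℂ) * Complex.I * ((m : ℂ) * (b : ℂ)) * (t : ℂ)) *
    g (t - (n : ℝ) * a)

/-- Frame coefficient `⟨f, E_{mb} T_{na} g⟩` in `L²(ℝ)`. -/
def whCoef (g : ℝ → ℂ) (a b : ℝ) (f : ℝ → ℂ) (p : ℤ × ℤ) : ℂ :=
  ∫ t : ℝ, f t * (starRingEnd ℂ) (gabor g a b p.1 p.2 t)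

/-- `(g,a,b)` is a Weyl–Heisenberg frame for `L²(ℝ)` with frame bounds `A, B`. -/
def IsWHFrameWith (g : ℝ → ℂ) (a b A B : ℝ) : Prop :=
  MemLp g 2 volume ∧ 0 < A ∧ 0 < B ∧
  ∀ f : ℝ → ℂ, MemLp f 2 volume →
    Summable (fun p : ℤ × ℤ => ‖whCoef g a b f p‖ ^ 2) ∧
    A * ∫ t : ℝ, ‖f t‖ ^ 2 ≤ (∑' p : ℤ × ℤ, ‖whCoef g a b f p‖ ^ 2) ∧
    (∑' p : ℤ × ℤ, ‖whCoef g a b f p‖ ^ 2) ≤ B * ∫ t : ℝ, ‖f t‖ ^ 2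

/-- `(g,a,b)` is a Weyl–Heisenberg frame for `L²(ℝ)`. -/
def IsWHFrame (g : ℝ → ℂ) (a b : ℝ) : Prop :=
  ∃ A B : ℝ, IsWHFrameWith g a b A B

/-- The Wiener amalgam norm `‖g‖_{W,a}`, valued in `ℝ≥0∞`. -/
def wienerNorm (g : ℝ → ℂ) (a : ℝ) : ℝ≥0∞ :=
  ∑' n : ℤ, eLpNorm (fun t => g (t - (n : ℝ) * a)) ⊤ (volume.restrict (Set.Ico 0 a))

/-!
Pointwise AM–GM gives `|f(t)| |f(t - k/b)| ≤ ½ |f(t)|² + ½ |f(t - k/b)|²`. After the translation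
`t ↦ t + k/b` the second term becomes `½ |f(t)|² |G_k(t + k/b)| = ½ |f(t)|² |G_{-k}(t)|`, so summing
over `k` and reindexing `k ↦ -k` it contributes exactly as much as the first.
-/

/-- The correlation function `G_k(t)`. -/
def gaborCorr (g : ℝ → ℂ) (a b : ℝ) (k : ℤ) (t : ℝ) : ℂ :=
  ∑' n : ℤ, g (t - (n : ℝ) * a) * (starRingEnd ℂ) (g (t - (n : ℝ) * a - (k : ℝ) / b))

lemma enorm_conj_mul_mul_le {𝕜 : Type*} [RCLike 𝕜] (x y z : 𝕜) :
    ‖(starRingEnd 𝕜) x * y * z‖ₑ ≤ 2⁻¹ * (‖x‖ₑ ^ 2 * ‖z‖ₑ) + 2⁻¹ * (‖y‖ₑ ^ 2 * ‖z‖ₑ) := by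
  have amgm : ‖x‖₊ * ‖y‖₊ * ‖z‖₊ ≤ 2⁻¹ * (‖x‖₊ ^ 2 * ‖z‖₊) + 2⁻¹ * (‖y‖₊ ^ 2 * ‖z‖₊) :=
    calc ‖x‖₊ * ‖y‖₊ * ‖z‖₊ = 2⁻¹ * (2 * ‖x‖₊ * ‖y‖₊) * ‖z‖₊ := by field_simp
      _ ≤ 2⁻¹ * (‖x‖₊ ^ 2 + ‖y‖₊ ^ 2) * ‖z‖₊ := by gcongr; exact two_mul_le_add_sq _ _
      _ = _ := by ring
  rw [enorm_mul, enorm_mul, RCLike.enorm_conj]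
  simp only [enorm_eq_nnnorm]
  rw [← ENNReal.coe_inv_two]
  exact_mod_cast amgm

section Translation

variable {α ι 𝕜 : Type*} [RCLike 𝕜] [MeasurableSpace α] [AddGroup α] [MeasurableAdd α]
  {μ : Measure α} [μ.IsAddRightInvariant] {f G : α → 𝕜}

lemma AEMeasurable.comp_sub_right {β : Type*} [MeasurableSpace β] {h : α → β}
    (hh : AEMeasurable h μ) (c : α) : AEMeasurable (fun t => h (t - c)) μ :=
  hh.comp_quasiMeasurePreserving (measurePreserving_sub_right μ c).quasiMeasurePreserving

lemma lintegral_enorm_conj_mul_sub_mul_le (hf : AEMeasurable f μ) (hG : AEMeasurable G μ) (c : α) :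
    ∫⁻ t, ‖(starRingEnd 𝕜) (f t) * f (t - c) * G t‖ₑ ∂μ
      ≤ 2⁻¹ * ∫⁻ t, ‖f t‖ₑ ^ 2 * ‖G t‖ₑ ∂μ + 2⁻¹ * ∫⁻ t, ‖f t‖ₑ ^ 2 * ‖G (t + c)‖ₑ ∂μ := by
  have hmeas : AEMeasurable (fun t => 2⁻¹ * (‖f t‖ₑ ^ 2 * ‖G t‖ₑ)) μ :=
    ((hf.enorm.pow_const 2).mul hG.enorm).const_mul _
  have htranslate : ∫⁻ t, ‖f (t - c)‖ₑ ^ 2 * ‖G t‖ₑ ∂μ = ∫⁻ t, ‖f t‖ₑ ^ 2 * ‖G (t + c)‖ₑ ∂μ := by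
    simpa only [sub_add_cancel] using
      lintegral_sub_right_eq_self (fun t => ‖f t‖ₑ ^ 2 * ‖G (t + c)‖ₑ) c
  calc ∫⁻ t, ‖(starRingEnd 𝕜) (f t) * f (t - c) * G t‖ₑ ∂μ
      ≤ ∫⁻ t, 2⁻¹ * (‖f t‖ₑ ^ 2 * ‖G t‖ₑ) + 2⁻¹ * (‖f (t - c)‖ₑ ^ 2 * ‖G t‖ₑ) ∂μ :=
        lintegral_mono fun t => enorm_conj_mul_mul_le _ _ _
    _ = _ := by
        rw [lintegral_add_left' hmeas, lintegral_const_mul' _ _ (ENNReal.inv_ne_top.2 two_ne_zero),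
          lintegral_const_mul' _ _ (ENNReal.inv_ne_top.2 two_ne_zero), htranslate]

theorem tsum_lintegral_enorm_conj_mul_sub_mul_le [InvolutiveNeg ι] [Countable ι] {G : ι → α → 𝕜}
    {c : ι → α} (hf : AEMeasurable f μ) (hG : ∀ k, AEMeasurable (G k) μ)
    (hGshift : ∀ k t, ‖G k (t + c k)‖ₑ = ‖G (-k) t‖ₑ) :
    ∑' k, ∫⁻ t, ‖(starRingEnd 𝕜) (f t) * f (t - c k) * G k t‖ₑ ∂μ
      ≤ ∫⁻ t, ‖f t‖ₑ ^ 2 * ∑' k, ‖G k t‖ₑ ∂μ := by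
  set X : ι → ℝ≥0∞ := fun k => ∫⁻ t, ‖f t‖ₑ ^ 2 * ‖G k t‖ₑ ∂μ
  have hk (k : ι) : ∫⁻ t, ‖(starRingEnd 𝕜) (f t) * f (t - c k) * G k t‖ₑ ∂μ
      ≤ 2⁻¹ * X k + 2⁻¹ * X (-k) := by
    simpa only [hGshift] using lintegral_enorm_conj_mul_sub_mul_le hf (hG k) (c k)
  calc ∑' k, ∫⁻ t, ‖(starRingEnd 𝕜) (f t) * f (t - c k) * G k t‖ₑ ∂μ
      ≤ ∑' k, (2⁻¹ * X k + 2⁻¹ * X (-k)) := ENNReal.tsum_le_tsum hk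
    _ = 2⁻¹ * ∑' k, X k + 2⁻¹ * ∑' k, X k := by
        rw [ENNReal.tsum_add, ENNReal.tsum_mul_left, ENNReal.tsum_mul_left, tsum_comp_neg X]
    _ = ∑' k, X k := by rw [← add_mul, ENNReal.inv_two_add_inv_two, one_mul]
    _ = ∫⁻ t, ‖f t‖ₑ ^ 2 * ∑' k, ‖G k t‖ₑ ∂μ := by
        simp only [X, ← ENNReal.tsum_mul_left]
        exact (lintegral_tsum fun k => (hf.enorm.pow_const 2).mul (hG k).enorm).symm

end Translation

section Gabor

variable {g : ℝ → ℂ} {a b : ℝ}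

lemma gaborCorr_add_div_eq_conj (k : ℤ) (t : ℝ) :
    gaborCorr g a b k (t + k / b) = (starRingEnd ℂ) (gaborCorr g a b (-k) t) := by
  simp only [gaborCorr, starRingEnd_apply, tsum_star, star_mul', star_star, Int.cast_neg]
  refine tsum_congr fun n => ?_
  rw [mul_comm, add_sub_right_comm, add_sub_cancel_right, neg_div, sub_neg_eq_add]

lemma aemeasurable_gaborCorr (hg : AEMeasurable g) (k : ℤ) : AEMeasurable (gaborCorr g a b k) := by
  refine AEMeasurable.tsum fun n => (hg.comp_sub_right _).mul ?_
  simp only [sub_sub]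
  exact Complex.continuous_conj.measurable.comp_aemeasurable (hg.comp_sub_right _)

end Gabor

theorem sum_integral_le_general (g f : ℝ → ℂ) (a b : ℝ)
    (hg : MemLp g 2 volume) (hf : MemLp f 2 volume) :
    ∑' k : ℤ, ∫⁻ t : ℝ, (‖(starRingEnd ℂ) (f t) * f (t - (k : ℝ) / b) *
        ∑' n : ℤ, g (t - (n : ℝ) * a) *
          (starRingEnd ℂ) (g (t - (n : ℝ) * a - (k : ℝ) / b))‖₊ : ℝ≥0∞)
      ≤ ∫⁻ t : ℝ, (‖f t‖₊ : ℝ≥0∞) ^ 2 *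
          ∑' k : ℤ, (‖∑' n : ℤ, g (t - (n : ℝ) * a) *
            (starRingEnd ℂ) (g (t - (n : ℝ) * a - (k : ℝ) / b))‖₊ : ℝ≥0∞) :=
  tsum_lintegral_enorm_conj_mul_sub_mul_le (G := gaborCorr g a b)
    hf.aestronglyMeasurable.aemeasurable
    (fun k => aemeasurable_gaborCorr hg.aestronglyMeasurable.aemeasurable k)
    (fun k t => by rw [gaborCorr_add_div_eq_conj, RCLike.enorm_conj])

/-- **Lemma 1.3.** For `g ∈ L²(ℝ)` and bounded, compactly supported `f`,
`∑_k ∫ |conj(f(t)) f(t-k/b) ∑_n g(t-na) conj(g(t-na-k/b))| dt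
  ≤ ∫ |f(t)|² ∑_k |G_k(t)| dt`. -/
theorem sum_integral_le (g f : ℝ → ℂ) (a b : ℝ) (ha : 0 < a) (hb : 0 < b)
    (hg : MemLp g 2 volume) (hf : MemLp f 2 volume)
    (hfbdd : ∃ M : ℝ, ∀ t : ℝ, ‖f t‖ ≤ M) (hfc : HasCompactSupport f) :
    ∑' k : ℤ, ∫⁻ t : ℝ, (‖(starRingEnd ℂ) (f t) * f (t - (k : ℝ) / b) *
        ∑' n : ℤ, g (t - (n : ℝ) * a) *
          (starRingEnd ℂ) (g (t - (n : ℝ) * a - (k : ℝ) / b))‖₊ : ℝ≥0∞)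
      ≤ ∫⁻ t : ℝ, (‖f t‖₊ : ℝ≥0∞) ^ 2 *
          ∑' k : ℤ, (‖∑' n : ℤ, g (t - (n : ℝ) * a) *
            (starRingEnd ℂ) (g (t - (n : ℝ) * a - (k : ℝ) / b))‖₊ : ℝ≥0∞) :=
  sum_integral_le_general g f a b hg hf

end
end

section
/- Let (f_i)_{i∈I} be a frame for a Hilbert space H with frame bounds A, B, let (g_i)_{i∈I} be a family in H, and suppose there exists a constant R with 0 ≤ R < A such that Σ_{i∈I} |⟨f, f_i − g_i⟩|² ≤ R‖f‖² for all f ∈ H. Then (g_i)_{i∈I} is a frame for H with frame bounds A(1−√(R/A))² and B(1+√(R/B))². -/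
open scoped InnerProductSpace

/-!
For fixed `x`, the coefficient sequences `u = (⟪x, f i⟫)` and `w = (⟪x, f i - g i⟫)` lie in `ℓ²`,
with `√A ‖x‖ ≤ ‖u‖ ≤ √B ‖x‖` and `‖w‖ ≤ √R ‖x‖`. The coefficients of `g` form `u - w`, so the
triangle inequality in `ℓ²` gives `(√A - √R) ‖x‖ ≤ ‖u - w‖ ≤ (√B + √R) ‖x‖`; squaring, and using
`R < A` for the sign of the lower bound, yields the frame bounds `(√A - √R)² = A (1 - √(R/A))²`
and `(√B + √R)² = B (1 + √(R/B))²`.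
-/

section SquareSummable

variable {I F : Type*} [NormedAddCommGroup F]

theorem memℓp_two_iff_summable_sq {u : I → F} :
    Memℓp u 2 ↔ Summable fun i => ‖u i‖ ^ 2 := by
  rw [memℓp_gen_iff (by norm_num)]
  norm_num

theorem lp.norm_two_eq_sqrt_tsum (u : lp (fun _ : I => F) 2) :
    ‖u‖ = √(∑' i, ‖u i‖ ^ 2) := by
  rw [lp.norm_eq_tsum_rpow (by norm_num), Real.sqrt_eq_rpow]
  norm_num

variable {u w : I → F}

theorem Summable.norm_sub_sq (hu : Summable fun i => ‖u i‖ ^ 2)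
    (hw : Summable fun i => ‖w i‖ ^ 2) : Summable fun i => ‖u i - w i‖ ^ 2 :=
  memℓp_two_iff_summable_sq.1
    ((memℓp_two_iff_summable_sq.2 hu).sub (memℓp_two_iff_summable_sq.2 hw))

theorem sqrt_tsum_norm_sub_sq_le (hu : Summable fun i => ‖u i‖ ^ 2)
    (hw : Summable fun i => ‖w i‖ ^ 2) :
    √(∑' i, ‖u i - w i‖ ^ 2) ≤ √(∑' i, ‖u i‖ ^ 2) + √(∑' i, ‖w i‖ ^ 2) := by
  let U : lp (fun _ : I => F) 2 := ⟨u, memℓp_two_iff_summable_sq.2 hu⟩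
  let W : lp (fun _ : I => F) 2 := ⟨w, memℓp_two_iff_summable_sq.2 hw⟩
  have h := norm_sub_le U W
  simp only [lp.norm_two_eq_sqrt_tsum] at h
  exact h

theorem sqrt_tsum_norm_sq_sub_le (hu : Summable fun i => ‖u i‖ ^ 2)
    (hw : Summable fun i => ‖w i‖ ^ 2) :
    √(∑' i, ‖u i‖ ^ 2) - √(∑' i, ‖w i‖ ^ 2) ≤ √(∑' i, ‖u i - w i‖ ^ 2) := by
  let U : lp (fun _ : I => F) 2 := ⟨u, memℓp_two_iff_summable_sq.2 hu⟩
  let W : lp (fun _ : I => F) 2 := ⟨w, memℓp_two_iff_summable_sq.2 hw⟩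
  have h := norm_sub_norm_le U W
  simp only [lp.norm_two_eq_sqrt_tsum] at h
  exact h

end SquareSummable

theorem Real.sqrt_mul_sq (a : ℝ) {t : ℝ} (ht : 0 ≤ t) : √(a * t ^ 2) = √a * t := by
  rw [Real.sqrt_mul' a (sq_nonneg t), Real.sqrt_sq ht]

theorem mul_one_sub_sqrt_div_sq {A : ℝ} (hA : 0 < A) (R : ℝ) :
    A * (1 - √(R / A)) ^ 2 = (√A - √R) ^ 2 := by
  have hsA : √A ≠ 0 := by positivity
  rw [Real.sqrt_div' R hA.le]
  field_simp
  rw [Real.sq_sqrt hA.le]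

theorem mul_one_add_sqrt_div_sq {B : ℝ} (hB : 0 < B) (R : ℝ) :
    B * (1 + √(R / B)) ^ 2 = (√B + √R) ^ 2 := by
  have hsB : √B ≠ 0 := by positivity
  rw [Real.sqrt_div' R hB.le]
  field_simp
  rw [Real.sq_sqrt hB.le]

theorem frame_perturbation_general {H : Type*} [NormedAddCommGroup H] [InnerProductSpace ℂ H]
    {I : Type*} (f g : I → H) (A B R : ℝ) (hA : 0 < A) (hB : 0 < B)
    (hframe : ∀ x : H,
      Summable (fun i : I => ‖⟪x, f i⟫_ℂ‖ ^ 2) ∧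
      A * ‖x‖ ^ 2 ≤ (∑' i : I, ‖⟪x, f i⟫_ℂ‖ ^ 2) ∧
      (∑' i : I, ‖⟪x, f i⟫_ℂ‖ ^ 2) ≤ B * ‖x‖ ^ 2)
    (hRA : R < A)
    (hpert : ∀ x : H,
      Summable (fun i : I => ‖⟪x, f i - g i⟫_ℂ‖ ^ 2) ∧
      (∑' i : I, ‖⟪x, f i - g i⟫_ℂ‖ ^ 2) ≤ R * ‖x‖ ^ 2) :
    ∀ x : H,
      Summable (fun i : I => ‖⟪x, g i⟫_ℂ‖ ^ 2) ∧
      A * (1 - Real.sqrt (R / A)) ^ 2 * ‖x‖ ^ 2 ≤ (∑' i : I, ‖⟪x, g i⟫_ℂ‖ ^ 2) ∧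
      (∑' i : I, ‖⟪x, g i⟫_ℂ‖ ^ 2) ≤ B * (1 + Real.sqrt (R / B)) ^ 2 * ‖x‖ ^ 2 := by
  intro x
  obtain ⟨hf_summable, hf_lower, hf_upper⟩ := hframe x
  obtain ⟨hd_summable, hd_upper⟩ := hpert x
  have hg_coeff (i : I) : ⟪x, g i⟫_ℂ = ⟪x, f i⟫_ℂ - ⟪x, f i - g i⟫_ℂ := by
    rw [inner_sub_right, sub_sub_cancel]
  simp only [hg_coeff]
  have hx := norm_nonneg x
  have hf_sqrt_lower := Real.sqrt_mul_sq A hx ▸ Real.sqrt_le_sqrt hf_lower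
  have hf_sqrt_upper := Real.sqrt_mul_sq B hx ▸ Real.sqrt_le_sqrt hf_upper
  have hd_sqrt_upper := Real.sqrt_mul_sq R hx ▸ Real.sqrt_le_sqrt hd_upper
  have hg_sqrt_lower := sqrt_tsum_norm_sq_sub_le hf_summable hd_summable
  have hg_sqrt_upper := sqrt_tsum_norm_sub_sq_le hf_summable hd_summable
  refine ⟨hf_summable.norm_sub_sq hd_summable, ?_, ?_⟩
  · rw [mul_one_sub_sqrt_div_sq hA, ← mul_pow]
    have hgap : 0 ≤ √A - √R := sub_nonneg.2 (Real.sqrt_le_sqrt hRA.le)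
    refine (Real.le_sqrt (mul_nonneg hgap hx) (tsum_nonneg fun i => by positivity)).1 ?_
    linarith [sub_mul √A √R ‖x‖]
  · rw [mul_one_add_sqrt_div_sq hB, ← mul_pow]
    refine (Real.sqrt_le_iff.1 ?_).2
    linarith [add_mul √B √R ‖x‖]

/-- **Theorem (Christensen–Heil).** If `(f_i)` is a frame with bounds `A, B` and there is
`0 ≤ R < A` with `∑_i |⟨f, f_i - g_i⟩|² ≤ R‖f‖²` for all `f`, then `(g_i)` is a frame with
bounds `A(1-√(R/A))²` and `B(1+√(R/B))²`. -/
theorem frame_perturbation {H : Type*} [NormedAddCommGroup H] [InnerProductSpace ℂ H]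
    {I : Type*} (f g : I → H) (A B R : ℝ) (hA : 0 < A) (hB : 0 < B)
    (hframe : ∀ x : H,
      Summable (fun i : I => ‖⟪x, f i⟫_ℂ‖ ^ 2) ∧
      A * ‖x‖ ^ 2 ≤ (∑' i : I, ‖⟪x, f i⟫_ℂ‖ ^ 2) ∧
      (∑' i : I, ‖⟪x, f i⟫_ℂ‖ ^ 2) ≤ B * ‖x‖ ^ 2)
    (hR0 : 0 ≤ R) (hRA : R < A)
    (hpert : ∀ x : H,
      Summable (fun i : I => ‖⟪x, f i - g i⟫_ℂ‖ ^ 2) ∧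
      (∑' i : I, ‖⟪x, f i - g i⟫_ℂ‖ ^ 2) ≤ R * ‖x‖ ^ 2) :
    ∀ x : H,
      Summable (fun i : I => ‖⟪x, g i⟫_ℂ‖ ^ 2) ∧
      A * (1 - Real.sqrt (R / A)) ^ 2 * ‖x‖ ^ 2 ≤ (∑' i : I, ‖⟪x, g i⟫_ℂ‖ ^ 2) ∧
      (∑' i : I, ‖⟪x, g i⟫_ℂ‖ ^ 2) ≤ B * (1 + Real.sqrt (R / B)) ^ 2 * ‖x‖ ^ 2 :=
  frame_perturbation_general f g A B R hA hB hframe hRA hpert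
end

section
/- Let g, h ∈ L²(ℝ) and let a, b > 0 with ab rational. If ess sup_{x∈ℝ} Σ_{k,n∈ℤ} |(g−h)(x − na − k/b)|² < ∞, then g = h almost everywhere. -/
open MeasureTheory Set
open scoped ENNReal

/-!
Put `F = |g - h|²`. Integrating `∑_{k,n} F(x - na - k/b)` over a period `(0, 1/b]`, the
translates by `k/b` tile the line, so for each `n` the sum over `k` contributes `∫ F`; the
integral is therefore `∑_n ∫ F`, which is infinite unless `∫ F = 0`. On the other hand it is at
most `(1/b) · ess sup`, which is finite.
-/

theorem tsum_setLIntegral_Ioc_sub_mul {T : ℝ} (hT : 0 < T) (F : ℝ → ℝ≥0∞) (c : ℝ) :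
    ∑' k : ℤ, ∫⁻ x in Ioc 0 T, F (x - c - k * T) = ∫⁻ x, F x := by
  let e : ℤ ≃ AddSubgroup.zmultiples T :=
    Equiv.ofBijective (fun k => ⟨k • T, AddSubgroup.zsmul_mem_zmultiples T k⟩)
      ⟨fun k l hkl => (zsmul_left_strictMono hT).injective (congrArg Subtype.val hkl),
        fun γ => (AddSubgroup.mem_zmultiples_iff.mp γ.2).imp fun k hk => Subtype.ext hk⟩
  have hfd := isAddFundamentalDomain_Ioc hT 0
  rw [zero_add] at hfd
  rw [← lintegral_sub_right_eq_self F c, hfd.lintegral_eq_tsum', ← e.tsum_eq]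
  refine tsum_congr fun k => setLIntegral_congr_fun measurableSet_Ioc fun x _ => ?_
  change F (x - c - k * T) = F (-(k • T) + x - c)
  rw [zsmul_eq_mul]
  ring_nf

theorem setLIntegral_le_essSup_mul {α : Type*} [MeasurableSpace α] (μ : Measure α)
    (f : α → ℝ≥0∞) (s : Set α) : ∫⁻ x in s, f x ∂μ ≤ essSup f μ * μ s :=
  (lintegral_mono_ae (ae_restrict_of_ae (ENNReal.ae_le_essSup f))).trans_eq
    (setLIntegral_const s _)

theorem setLIntegral_Ioc_tsum_lattice_translates {F : ℝ → ℝ≥0∞} (hF : AEMeasurable F)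
    {T : ℝ} (hT : 0 < T) (a : ℝ) :
    ∫⁻ x in Ioc 0 T, ∑' p : ℤ × ℤ, F (x - p.2 * a - p.1 * T) = ∑' _ : ℤ, ∫⁻ x, F x := by
  have hmeas (p : ℤ × ℤ) :
      AEMeasurable (fun x => F (x - p.2 * a - p.1 * T)) (volume.restrict (Ioc 0 T)) := by
    simp_rw [sub_sub]
    exact (hF.comp_quasiMeasurePreserving
      (measurePreserving_sub_right volume _).quasiMeasurePreserving).restrict
  rw [lintegral_tsum hmeas, ENNReal.tsum_prod', ENNReal.tsum_comm]
  exact tsum_congr fun n => tsum_setLIntegral_Ioc_sub_mul hT F (n * a)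

theorem ae_eq_zero_of_essSup_tsum_lattice_translates_lt_top {F : ℝ → ℝ≥0∞}
    (hF : AEMeasurable F) {T : ℝ} (hT : 0 < T) (a : ℝ)
    (h : essSup (fun x => ∑' p : ℤ × ℤ, F (x - p.2 * a - p.1 * T)) volume < ⊤) :
    F =ᵐ[volume] 0 := by
  refine (lintegral_eq_zero_iff' hF).mp (by_contra fun hne => ?_)
  have hlt := (setLIntegral_le_essSup_mul volume _ (Ioc 0 T)).trans_lt
    (ENNReal.mul_lt_top h measure_Ioc_lt_top)
  rw [setLIntegral_Ioc_tsum_lattice_translates hF hT a,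
    ENNReal.tsum_const_eq_top_of_ne_zero hne] at hlt
  exact hlt.ne rfl

theorem rational_ab_double_sum_bounded_general (g h : ℝ → ℂ) (a b : ℝ) (hb : 0 < b)
    (hg : MemLp g 2 volume) (hh : MemLp h 2 volume)
    (hbdd : essSup
        (fun x : ℝ => ∑' p : ℤ × ℤ,
          (‖g (x - (p.2 : ℝ) * a - (p.1 : ℝ) / b) -
              h (x - (p.2 : ℝ) * a - (p.1 : ℝ) / b)‖₊ : ℝ≥0∞) ^ 2) volume < ⊤) :
    g =ᵐ[volume] h := by
  have hF : AEMeasurable (fun x => ‖g x - h x‖ₑ ^ 2) volume :=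
    (hg.aestronglyMeasurable.sub hh.aestronglyMeasurable).enorm.pow_const 2
  simp only [div_eq_mul_inv] at hbdd
  filter_upwards [ae_eq_zero_of_essSup_tsum_lattice_translates_lt_top hF (inv_pos.2 hb) a hbdd]
    with x hx
  simpa [sub_eq_zero] using hx

/-- If `a`, `b > 0` with `ab` rational and
`ess sup_x ∑_{k,n} |(g-h)(x - na - k/b)|² < ∞`, then `g = h` a.e. -/
theorem rational_ab_double_sum_bounded (g h : ℝ → ℂ) (a b : ℝ) (ha : 0 < a) (hb : 0 < b)
    (hg : MemLp g 2 volume) (hh : MemLp h 2 volume)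
    (hrat : ∃ q : ℚ, a * b = (q : ℝ))
    (hbdd : essSup
        (fun x : ℝ => ∑' p : ℤ × ℤ,
          (‖g (x - (p.2 : ℝ) * a - (p.1 : ℝ) / b) -
              h (x - (p.2 : ℝ) * a - (p.1 : ℝ) / b)‖₊ : ℝ≥0∞) ^ 2) volume < ⊤) :
    g =ᵐ[volume] h :=
  rational_ab_double_sum_bounded_general g h a b hb hg hh hbdd
end

section
/- Fix 0 < ε < 1 and let g = χ_{[0,1]} + (1−ε)χ_{[1,2]} ∈ L²(ℝ). Then for every finitely supported sequence of scalars (a_{mn})_{m,n∈ℤ}, ‖ Σ_{m,n∈ℤ} a_{mn} E_m T_n g ‖ ≥ ε ( Σ_{m,n∈ℤ} |a_{mn}|² )^{1/2}. In particular, (E_m T_n g)_{m,n∈ℤ} is a Riesz basic sequence with lower Riesz bound ε². -/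
open MeasureTheory Set
open scoped ENNReal NNReal

noncomputable section

/-! With `h = χ_{[0,1]}` we have `g = h + (1 - ε) T₁ h`, and `T₁` commutes with every `E_m`,
`m ∈ ℤ`. Hence `∑ a_{mn} E_m T_n g = G + (1 - ε) T₁ G` with `G = ∑ a_{mn} E_m T_n h`. The family
`E_m T_n h` is orthonormal (distinct integer translates of `[0,1]` meet in a null set, and the
`E_m` are orthonormal on a unit interval), so `‖G‖² = ∑ |a_{mn}|²`, and the triangle inequality
for the isometry `T₁` gives `ε ‖G‖ ≤ ‖G + (1 - ε) T₁ G‖ ≤ (2 - ε) ‖G‖`. -/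

open Complex ComplexConjugate
open scoped Real

theorem sq_norm_add_smul_bounds {E : Type*} [SeminormedAddCommGroup E] [NormedSpace ℝ E]
    (a b : E) {r : ℝ} (hr : 0 ≤ r) :
    (1 - r) * ‖a‖ ^ 2 - r * (1 - r) * ‖b‖ ^ 2 ≤ ‖a + r • b‖ ^ 2 ∧
      ‖a + r • b‖ ^ 2 ≤ (1 + r) * ‖a‖ ^ 2 + r * (1 + r) * ‖b‖ ^ 2 := by
  have hrb : ‖r • b‖ = r * ‖b‖ := by rw [norm_smul, Real.norm_of_nonneg hr]
  have hlow : |‖a‖ - r * ‖b‖| ≤ ‖a + r • b‖ := by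
    simpa [hrb] using abs_norm_sub_norm_le a (-(r • b))
  have hup : ‖a + r • b‖ ≤ ‖a‖ + r * ‖b‖ := hrb ▸ norm_add_le a (r • b)
  have hamgm : 2 * ‖a‖ * ‖b‖ ≤ ‖a‖ ^ 2 + ‖b‖ ^ 2 := by nlinarith [sq_nonneg (‖a‖ - ‖b‖)]
  constructor
  · nlinarith [sq_abs (‖a‖ - r * ‖b‖), abs_nonneg (‖a‖ - r * ‖b‖)]
  · nlinarith [norm_nonneg (a + r • b)]

theorem integral_sq_norm_add_smul_translate_bounds {α E : Type*} [MeasurableSpace α] [AddGroup α]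
    [MeasurableAdd α] {μ : Measure α} [μ.IsAddRightInvariant]
    [NormedAddCommGroup E] [NormedSpace ℝ E] {G : α → E} (hG : MemLp G 2 μ)
    {r : ℝ} (hr : 0 ≤ r) (s : α) :
    (1 - r) ^ 2 * ∫ t, ‖G t‖ ^ 2 ∂μ ≤ ∫ t, ‖G t + r • G (t - s)‖ ^ 2 ∂μ ∧
      ∫ t, ‖G t + r • G (t - s)‖ ^ 2 ∂μ ≤ (1 + r) ^ 2 * ∫ t, ‖G t‖ ^ 2 ∂μ := by
  have hGs : MemLp (fun t => G (t - s)) 2 μ :=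
    hG.comp_measurePreserving (measurePreserving_sub_right μ s)
  have hsq : ∀ {F : α → E}, MemLp F 2 μ → Integrable (fun t => ‖F t‖ ^ 2) μ := fun hF =>
    (memLp_two_iff_integrable_sq_norm hF.1).1 hF
  have hG2 := hsq hG
  have hGs2 := hsq hGs
  have hF2 := hsq (hG.add (hGs.const_smul r))
  have htrans : ∫ t, ‖G (t - s)‖ ^ 2 ∂μ = ∫ t, ‖G t‖ ^ 2 ∂μ :=
    integral_sub_right_eq_self (fun t => ‖G t‖ ^ 2) s
  constructor
  · calc (1 - r) ^ 2 * ∫ t, ‖G t‖ ^ 2 ∂μ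
        = ∫ t, ((1 - r) * ‖G t‖ ^ 2 - r * (1 - r) * ‖G (t - s)‖ ^ 2) ∂μ := by
          rw [integral_sub (hG2.const_mul _) (hGs2.const_mul _), integral_const_mul,
            integral_const_mul, htrans]
          ring
      _ ≤ ∫ t, ‖G t + r • G (t - s)‖ ^ 2 ∂μ :=
          integral_mono ((hG2.const_mul _).sub (hGs2.const_mul _)) hF2
            fun t => (sq_norm_add_smul_bounds _ _ hr).1
  · calc ∫ t, ‖G t + r • G (t - s)‖ ^ 2 ∂μ
        ≤ ∫ t, ((1 + r) * ‖G t‖ ^ 2 + r * (1 + r) * ‖G (t - s)‖ ^ 2) ∂μ :=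
          integral_mono hF2 ((hG2.const_mul _).add (hGs2.const_mul _))
            fun t => (sq_norm_add_smul_bounds _ _ hr).2
      _ = (1 + r) ^ 2 * ∫ t, ‖G t‖ ^ 2 ∂μ := by
          rw [integral_add (hG2.const_mul _) (hGs2.const_mul _), integral_const_mul,
            integral_const_mul, htrans]
          ring

theorem integral_sq_norm_sum_of_orthonormal {α ι 𝕜 : Type*} [MeasurableSpace α] {μ : Measure α}
    [RCLike 𝕜] [DecidableEq ι] (s : Finset ι) {f : ι → α → 𝕜} (hf : ∀ i ∈ s, MemLp (f i) 2 μ)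
    (horth : ∀ i ∈ s, ∀ j ∈ s, ∫ t, f i t * conj (f j t) ∂μ = if i = j then 1 else 0)
    (c : ι → 𝕜) :
    ∫ t, ‖∑ i ∈ s, c i * f i t‖ ^ 2 ∂μ = ∑ i ∈ s, ‖c i‖ ^ 2 := by
  have hint : ∀ i ∈ s, ∀ j ∈ s, Integrable (fun t => f i t * conj (f j t)) μ :=
    fun i hi j hj => (hf i hi).integrable_mul (hf j hj).star
  have hexpand : ∀ t, ((‖∑ i ∈ s, c i * f i t‖ ^ 2 : ℝ) : 𝕜) =
      ∑ i ∈ s, ∑ j ∈ s, c i * conj (c j) * (f i t * conj (f j t)) := by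
    intro t
    rw [RCLike.ofReal_pow, ← RCLike.mul_conj, map_sum, Finset.sum_mul_sum]
    refine Finset.sum_congr rfl fun i _ => Finset.sum_congr rfl fun j _ => ?_
    rw [map_mul]
    ring
  apply RCLike.ofReal_injective (K := 𝕜)
  rw [← integral_ofReal, RCLike.ofReal_sum]
  simp_rw [hexpand]
  rw [integral_finsetSum _ fun i hi =>
    integrable_finsetSum _ fun j hj => (hint i hi j hj).const_mul _]
  refine Finset.sum_congr rfl fun i hi => ?_
  rw [integral_finsetSum _ fun j hj => (hint i hi j hj).const_mul _]
  simp_rw [integral_const_mul]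
  rw [Finset.sum_congr rfl fun j hj => congrArg _ (horth i hi j hj)]
  simp [hi, RCLike.mul_conj]

def unitBox : ℝ → ℂ := (Icc (0 : ℝ) 1).indicator fun _ => 1

theorem memLp_gabor {g : ℝ → ℂ} {p : ℝ≥0∞} (hg : MemLp g p) (a b : ℝ) (m n : ℤ) :
    MemLp (gabor g a b m n) p := by
  have hgn : MemLp (fun t => g (t - n * a)) p :=
    hg.comp_measurePreserving (measurePreserving_sub_right volume _)
  refine hgn.of_le ((by fun_prop : Continuous fun t : ℝ => exp (2 * π * I * (m * b) * t))
    |>.aestronglyMeasurable.mul hgn.1) (ae_of_all _ fun t => ?_)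
  simp [gabor, norm_exp]

theorem gabor_unitBox (m n : ℤ) :
    gabor unitBox 1 1 m n = (Icc (n : ℝ) (n + 1)).indicator fun t => exp (2 * π * I * m * t) := by
  ext t
  simp only [gabor, unitBox, indicator_apply, mem_Icc, sub_nonneg, sub_le_iff_le_add', mul_one,
    ofReal_one]
  split_ifs <;> simp

theorem gabor_unitBox_mul_conj (m n m' n' : ℤ) (t : ℝ) :
    gabor unitBox 1 1 m n t * conj (gabor unitBox 1 1 m' n' t) =
      (Icc (n : ℝ) (n + 1) ∩ Icc (n' : ℝ) (n' + 1)).indicator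
        (fun t => exp (2 * π * I * (m - m' : ℤ) * t)) t := by
  simp only [gabor_unitBox, indicator_apply, mem_inter_iff]
  split_ifs <;> simp_all [← exp_conj, ← exp_add, map_ofNat]
  congr 1
  ring

theorem setIntegral_Icc_exp_two_pi_I_int_mul (k : ℤ) (c : ℝ) :
    ∫ t in Icc c (c + 1), exp (2 * π * I * k * t) = if k = 0 then 1 else 0 := by
  rw [integral_Icc_eq_integral_Ioc, ← intervalIntegral.integral_of_le (by linarith)]
  split_ifs with hk
  · simp [hk]
  have hc : 2 * π * I * k ≠ 0 := by simp [Real.pi_ne_zero, I_ne_zero, hk]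
  have hperiod : exp (2 * π * I * k * ↑(c + 1)) = exp (2 * π * I * k * c) := by
    rw [ofReal_add, ofReal_one, mul_add, mul_one, exp_add, mul_comm _ (k : ℂ),
      exp_int_mul_two_pi_mul_I, mul_one]
  rw [integral_exp_mul_complex hc, hperiod, sub_self, zero_div]

theorem integral_gabor_unitBox_mul_conj (p q : ℤ × ℤ) :
    ∫ t, gabor unitBox 1 1 p.1 p.2 t * conj (gabor unitBox 1 1 q.1 q.2 t) =
      if p = q then 1 else 0 := by
  simp_rw [gabor_unitBox_mul_conj]
  rw [integral_indicator (measurableSet_Icc.inter measurableSet_Icc)]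
  obtain ⟨m, n⟩ := p
  obtain ⟨m', n'⟩ := q
  rcases eq_or_ne n n' with rfl | hn
  · rw [inter_self, setIntegral_Icc_exp_two_pi_I_int_mul]
    simp [sub_eq_zero]
  have hnull : volume (Icc (n : ℝ) (n + 1) ∩ Icc (n' : ℝ) (n' + 1)) = 0 := by
    rw [Icc_inter_Icc, Real.volume_Icc, ENNReal.ofReal_eq_zero, sub_nonpos]
    rcases hn.lt_or_gt with h | h
    · exact min_le_of_left_le (le_max_of_le_right (by exact_mod_cast h))
    · exact min_le_of_right_le (le_max_of_le_left (by exact_mod_cast h))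
  rw [setIntegral_measure_zero _ hnull]
  simp [hn]

theorem gabor_add_mul_translate (h : ℝ → ℂ) (r : ℂ) (a : ℝ) (k m n : ℤ) (t : ℝ) :
    gabor (fun s => h s + r * h (s - k)) a 1 m n t =
      gabor h a 1 m n t + r * gabor h a 1 m n (t - k) := by
  have hperiod :
      exp (2 * π * I * (m * (1 : ℝ)) * ↑(t - k)) = exp (2 * π * I * (m * (1 : ℝ)) * t) := by
    rw [ofReal_one, mul_one, ofReal_sub, mul_sub, exp_sub, ofReal_intCast,
      show 2 * π * I * m * k = ((m * k : ℤ) : ℂ) * (2 * π * I) by push_cast; ring,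
      exp_int_mul_two_pi_mul_I, div_one]
  simp only [gabor, hperiod, sub_right_comm t (k : ℝ)]
  ring

def gaborSynthesis (g : ℝ → ℂ) (a b : ℝ) (c : (ℤ × ℤ) →₀ ℂ) (t : ℝ) : ℂ :=
  ∑ p ∈ c.support, c p * gabor g a b p.1 p.2 t

theorem gaborSynthesis_add_mul_translate (h : ℝ → ℂ) (r : ℂ) (a : ℝ) (k : ℤ)
    (c : (ℤ × ℤ) →₀ ℂ) (t : ℝ) :
    gaborSynthesis (fun s => h s + r * h (s - k)) a 1 c t =
      gaborSynthesis h a 1 c t + r * gaborSynthesis h a 1 c (t - k) := by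
  simp only [gaborSynthesis, gabor_add_mul_translate, mul_add, Finset.sum_add_distrib,
    Finset.mul_sum, mul_left_comm r]

theorem memLp_gaborSynthesis {g : ℝ → ℂ} {p : ℝ≥0∞} (hg : MemLp g p) (a b : ℝ)
    (c : (ℤ × ℤ) →₀ ℂ) : MemLp (gaborSynthesis g a b c) p :=
  memLp_finsetSum _ fun q _ => (memLp_gabor hg a b q.1 q.2).const_mul (c q)

theorem memLp_unitBox (p : ℝ≥0∞) : MemLp unitBox p :=
  memLp_indicator_const p measurableSet_Icc 1 (Or.inr measure_Icc_lt_top.ne)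

theorem integral_sq_norm_gaborSynthesis_unitBox (c : (ℤ × ℤ) →₀ ℂ) :
    ∫ t, ‖gaborSynthesis unitBox 1 1 c t‖ ^ 2 = ∑ p ∈ c.support, ‖c p‖ ^ 2 :=
  integral_sq_norm_sum_of_orthonormal _ (fun p _ => memLp_gabor (memLp_unitBox 2) 1 1 p.1 p.2)
    (fun p _ q _ => integral_gabor_unitBox_mul_conj p q) c

theorem integral_sq_norm_gaborSynthesis_unitBox_add_translate_bounds {r : ℝ} (hr : 0 ≤ r)
    (c : (ℤ × ℤ) →₀ ℂ) :
    (1 - r) ^ 2 * ∑ p ∈ c.support, ‖c p‖ ^ 2 ≤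
        ∫ t, ‖gaborSynthesis (fun s => unitBox s + r * unitBox (s - 1)) 1 1 c t‖ ^ 2 ∧
      ∫ t, ‖gaborSynthesis (fun s => unitBox s + r * unitBox (s - 1)) 1 1 c t‖ ^ 2 ≤
        (1 + r) ^ 2 * ∑ p ∈ c.support, ‖c p‖ ^ 2 := by
  have hsyn := gaborSynthesis_add_mul_translate unitBox r 1 1 c
  push_cast at hsyn
  simp_rw [hsyn, ← real_smul, ← integral_sq_norm_gaborSynthesis_unitBox c]
  exact integral_sq_norm_add_smul_translate_bounds (memLp_gaborSynthesis (memLp_unitBox 2) 1 1 c)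
    hr 1

theorem riesz_basic_lower_bound_general (ε : ℝ) (hε1 : ε < 1) (g : ℝ → ℂ)
    (hgdef : g = fun t : ℝ =>
      Set.indicator (Set.Icc (0 : ℝ) 1) (fun _ => (1 : ℂ)) t +
        ((1 - ε : ℝ) : ℂ) * Set.indicator (Set.Icc (1 : ℝ) 2) (fun _ => (1 : ℂ)) t) :
    (∀ c : (ℤ × ℤ) →₀ ℂ,
      ε * Real.sqrt (∑ p ∈ c.support, ‖c p‖ ^ 2)
        ≤ Real.sqrt (∫ t : ℝ, ‖∑ p ∈ c.support, c p * gabor g 1 1 p.1 p.2 t‖ ^ 2)) ∧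
    (∃ C : ℝ, 0 < C ∧ ∀ c : (ℤ × ℤ) →₀ ℂ,
      ε ^ 2 * (∑ p ∈ c.support, ‖c p‖ ^ 2)
          ≤ (∫ t : ℝ, ‖∑ p ∈ c.support, c p * gabor g 1 1 p.1 p.2 t‖ ^ 2) ∧
        (∫ t : ℝ, ‖∑ p ∈ c.support, c p * gabor g 1 1 p.1 p.2 t‖ ^ 2)
          ≤ C * (∑ p ∈ c.support, ‖c p‖ ^ 2)) := by
  have hg : g = fun s => unitBox s + ((1 - ε : ℝ) : ℂ) * unitBox (s - 1) := by
    ext t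
    simp only [hgdef, unitBox, indicator_apply, mem_Icc, sub_nonneg, sub_le_iff_le_add']
    norm_num
  have hbounds (c : (ℤ × ℤ) →₀ ℂ) := hg ▸
    integral_sq_norm_gaborSynthesis_unitBox_add_translate_bounds (r := 1 - ε) (by linarith) c
  rw [sub_sub_cancel] at hbounds
  refine ⟨fun c => ?_, (2 - ε) ^ 2, by nlinarith,
    fun c => ⟨(hbounds c).1, (hbounds c).2.trans_eq (by ring)⟩⟩
  calc ε * √(∑ p ∈ c.support, ‖c p‖ ^ 2)
      ≤ |ε| * √(∑ p ∈ c.support, ‖c p‖ ^ 2) := by gcongr; exact le_abs_self ε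
    _ = √(ε ^ 2 * ∑ p ∈ c.support, ‖c p‖ ^ 2) := by
        rw [Real.sqrt_mul (sq_nonneg ε), Real.sqrt_sq_eq_abs]
    _ ≤ _ := Real.sqrt_le_sqrt (hbounds c).1

/-- For `g = χ_{[0,1]} + (1-ε)χ_{[1,2]}` with `0 < ε < 1`, every finitely supported sequence
of scalars `(a_{mn})` satisfies `‖∑ a_{mn} E_m T_n g‖ ≥ ε (∑ |a_{mn}|²)^{1/2}`; in particular
`(E_m T_n g)` is a Riesz basic sequence with lower Riesz bound `ε²`. -/
theorem riesz_basic_lower_bound (ε : ℝ) (hε0 : 0 < ε) (hε1 : ε < 1) (g : ℝ → ℂ)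
    (hgdef : g = fun t : ℝ =>
      Set.indicator (Set.Icc (0 : ℝ) 1) (fun _ => (1 : ℂ)) t +
        ((1 - ε : ℝ) : ℂ) * Set.indicator (Set.Icc (1 : ℝ) 2) (fun _ => (1 : ℂ)) t) :
    (∀ c : (ℤ × ℤ) →₀ ℂ,
      ε * Real.sqrt (∑ p ∈ c.support, ‖c p‖ ^ 2)
        ≤ Real.sqrt (∫ t : ℝ, ‖∑ p ∈ c.support, c p * gabor g 1 1 p.1 p.2 t‖ ^ 2)) ∧
    (∃ C : ℝ, 0 < C ∧ ∀ c : (ℤ × ℤ) →₀ ℂ,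
      ε ^ 2 * (∑ p ∈ c.support, ‖c p‖ ^ 2)
          ≤ (∫ t : ℝ, ‖∑ p ∈ c.support, c p * gabor g 1 1 p.1 p.2 t‖ ^ 2) ∧
        (∫ t : ℝ, ‖∑ p ∈ c.support, c p * gabor g 1 1 p.1 p.2 t‖ ^ 2)
          ≤ C * (∑ p ∈ c.support, ‖c p‖ ^ 2)) :=
  riesz_basic_lower_bound_general ε hε1 g hgdef
end
end

section
/- Let h = χ_{[0,2]} ∈ L²(ℝ). Then (h, 1, 1) is not a Weyl–Heisenberg frame for L²(ℝ); that is, there is no pair of constants A, B > 0 such that A‖f‖² ≤ Σ_{m,n∈ℤ} |⟨f, E_m T_n h⟩|² ≤ B‖f‖² for all f ∈ L²(ℝ). -/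
open MeasureTheory Set
open scoped ENNReal NNReal

noncomputable section

/-!
Test `h = χ_{[0,2]}` against the step functions `f_N = ∑_{0 ≤ k < N} (-1)^k χ_{[k,k+1)}`, for which
`‖f_N‖² = N`. The window `T_n h` covers exactly the two unit intervals `[n, n+1)` and `[n+1, n+2)`,
on each of which `e^{-2πimt}` integrates to `δ_{m,0}`; hence `⟨f, E_m T_n h⟩ = δ_{m,0} (c_n + c_{n+1})`
for any `f = ∑ c_k χ_{[k,k+1)}`. For the alternating coefficients of `f_N` these sums cancel except
at `n = -1` and `n = N - 1`, so the frame sum of `f_N` stays bounded while `‖f_N‖² → ∞`, and no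
lower frame bound exists.
-/

open Complex Real

theorem conj_exp_two_pi_I_mul (x t : ℝ) :
    (starRingEnd ℂ) (exp (2 * π * I * x * t)) = exp (-(2 * π * I * x * t)) := by
  rw [← exp_conj]
  simp [map_ofNat]

theorem whCoef_indicator_Icc {L : ℝ} (hL : 0 ≤ L) (a b : ℝ) (f : ℝ → ℂ) (m n : ℤ) :
    whCoef (indicator (Icc 0 L) fun _ => 1) a b f (m, n) =
      ∫ t in n * a..n * a + L, f t * exp (-(2 * π * I * (m * b : ℝ) * t)) := by
  have hatom : ∀ t, f t * (starRingEnd ℂ) (gabor (indicator (Icc 0 L) fun _ => 1) a b m n t) =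
      indicator (Icc (n * a) (n * a + L))
        (fun t => f t * exp (-(2 * π * I * (m * b : ℝ) * t))) t := by
    intro t
    have hmem : t - n * a ∈ Icc 0 L ↔ t ∈ Icc (n * a) (n * a + L) := by
      simp only [mem_Icc]; constructor <;> rintro ⟨h₁, h₂⟩ <;> constructor <;> linarith
    have hexp := conj_exp_two_pi_I_mul (m * b) t
    push_cast at hexp
    by_cases ht : t ∈ Icc (n * a) (n * a + L)
    · simp [gabor, indicator_of_mem ht, indicator_of_mem (hmem.2 ht), hexp]
    · simp [gabor, indicator_of_notMem ht, indicator_of_notMem (mt hmem.1 ht)]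
  rw [whCoef, intervalIntegral.integral_of_le (by linarith), ← integral_Icc_eq_integral_Ioc,
    ← integral_indicator measurableSet_Icc]
  simp only [hatom]

theorem integral_exp_neg_two_pi_I_int_mul (m : ℤ) (a : ℝ) :
    ∫ t in a..a + 1, exp (-(2 * π * I * m * t)) = if m = 0 then 1 else 0 := by
  split_ifs with hm
  · simp [hm]
  have hc : -(2 * π * I * m) ≠ 0 := by simp [Real.pi_ne_zero, I_ne_zero, hm]
  have hperiod :
      exp (-(2 * π * I * m) * ((a + 1 : ℝ) : ℂ)) = exp (-(2 * π * I * m) * (a : ℂ)) := by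
    rw [show -(2 * π * I * m) * ((a + 1 : ℝ) : ℂ) = -(2 * π * I * m) * a + (-m : ℤ) * (2 * π * I)
      by push_cast; ring, Complex.exp_add, exp_int_mul_two_pi_mul_I, mul_one]
  simp only [neg_mul_eq_neg_mul (2 * π * I * m)]
  rw [integral_exp_mul_complex hc, hperiod, sub_self, zero_div]

section FloorStep

variable (c : ℤ → ℂ) {g : ℝ → ℂ} (k : ℤ)

theorem floor_eq_of_mem_Ioo {t : ℝ} (ht : t ∈ Ioo (k : ℝ) (k + 1)) : ⌊t⌋ = k :=
  Int.floor_eq_iff.2 ⟨ht.1.le, ht.2⟩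

theorem intervalIntegrable_comp_floor_mul (hg : IntervalIntegrable g volume k (k + 1)) :
    IntervalIntegrable (fun t => c ⌊t⌋ * g t) volume k (k + 1) := by
  have hk : (k : ℝ) ≤ k + 1 := by linarith
  rw [intervalIntegrable_iff_integrableOn_Ioo_of_le hk] at hg ⊢
  refine IntegrableOn.congr_fun (hg.const_mul (c k)) (fun t ht => ?_) measurableSet_Ioo
  simp only [floor_eq_of_mem_Ioo k ht]

theorem intervalIntegral_comp_floor_mul :
    ∫ t in (k : ℝ)..k + 1, c ⌊t⌋ * g t = c k * ∫ t in (k : ℝ)..k + 1, g t := by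
  have hk : (k : ℝ) ≤ k + 1 := by linarith
  rw [intervalIntegral.integral_of_le hk, intervalIntegral.integral_of_le hk,
    integral_Ioc_eq_integral_Ioo, integral_Ioc_eq_integral_Ioo, ← integral_const_mul]
  refine setIntegral_congr_fun measurableSet_Ioo fun t ht => ?_
  simp only [floor_eq_of_mem_Ioo k ht]

end FloorStep

theorem whCoef_indicator_Icc_zero_two_comp_floor (c : ℤ → ℂ) (p : ℤ × ℤ) :
    whCoef (indicator (Icc 0 2) fun _ => 1) 1 1 (fun t => c ⌊t⌋) p =
      if p.1 = 0 then c p.2 + c (p.2 + 1) else 0 := by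
  obtain ⟨m, n⟩ := p
  set e : ℝ → ℂ := fun t => exp (-(2 * π * I * m * t))
  have he : Continuous e := by fun_prop
  have hint : ∀ k : ℤ, IntervalIntegrable (fun t => c ⌊t⌋ * e t) volume k (k + 1) :=
    fun k => intervalIntegrable_comp_floor_mul c k (he.intervalIntegrable _ _)
  have hsplit := intervalIntegral.integral_add_adjacent_intervals (hint n)
    (by exact_mod_cast hint (n + 1))
  rw [whCoef_indicator_Icc zero_le_two]
  push_cast at hsplit ⊢
  simp only [mul_one]
  have hnext := intervalIntegral_comp_floor_mul c (g := e) (n + 1)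
  push_cast at hnext
  rw [show (n : ℝ) + 2 = n + 1 + 1 by ring, ← hsplit, intervalIntegral_comp_floor_mul, hnext]
  simp only [e, integral_exp_neg_two_pi_I_int_mul]
  split_ifs <;> simp

def altSeq (N : ℕ) : ℤ → ℂ := indicator (Ico 0 N) fun k => (-1) ^ k

section AltSeq

variable (N : ℕ)

theorem norm_altSeq_le (k : ℤ) : ‖altSeq N k‖ ≤ 1 := by
  by_cases hk : k ∈ Ico (0 : ℤ) N <;> simp [altSeq, hk]

theorem altSeq_add_altSeq_add_one {n : ℤ} (h₁ : n ≠ -1) (h₂ : n ≠ N - 1) :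
    altSeq N n + altSeq N (n + 1) = 0 := by
  by_cases hn : n ∈ Ico (0 : ℤ) N
  · have hn' : n + 1 ∈ Ico (0 : ℤ) N := by simp only [mem_Ico] at hn ⊢; omega
    simp [altSeq, hn, hn', zpow_add_one₀]
  · have hn' : n + 1 ∉ Ico (0 : ℤ) N := by simp only [mem_Ico] at hn ⊢; omega
    simp [altSeq, hn, hn']

theorem altSeq_comp_floor :
    (fun t : ℝ => altSeq N ⌊t⌋) = indicator (Ico (0 : ℝ) N) fun t => (-1 : ℂ) ^ ⌊t⌋ := by
  ext t
  have hmem : ⌊t⌋ ∈ Ico (0 : ℤ) N ↔ t ∈ Ico (0 : ℝ) N := by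
    simp [Int.floor_nonneg, Int.floor_lt]
  by_cases ht : t ∈ Ico (0 : ℝ) N
  · simp [altSeq, ht, hmem.2 ht]
  · simp [altSeq, ht, mt hmem.1 ht]

theorem memLp_altSeq_comp_floor : MemLp (fun t : ℝ => altSeq N ⌊t⌋) 2 volume := by
  rw [altSeq_comp_floor, memLp_indicator_iff_restrict measurableSet_Ico]
  have hmeas : Measurable fun t : ℝ => (-1 : ℂ) ^ ⌊t⌋ :=
    (measurable_of_countable _).comp Int.measurable_floor
  refine MemLp.of_bound hmeas.aestronglyMeasurable 1 (ae_of_all _ fun t => ?_)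
  simp

theorem integral_norm_sq_altSeq_comp_floor : ∫ t : ℝ, ‖altSeq N ⌊t⌋‖ ^ 2 = N := by
  have hnorm :
      (fun t : ℝ => ‖altSeq N ⌊t⌋‖ ^ 2) = indicator (Ico (0 : ℝ) N) fun _ => (1 : ℝ) := by
    ext t
    rw [congrFun (altSeq_comp_floor N) t]
    by_cases ht : t ∈ Ico (0 : ℝ) N <;> simp [ht]
  rw [hnorm, integral_indicator_const _ measurableSet_Ico]
  simp

end AltSeq

theorem tsum_norm_sq_whCoef_altSeq_le (N : ℕ) :
    ∑' p : ℤ × ℤ,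
      ‖whCoef (indicator (Icc 0 2) fun _ => 1) 1 1 (fun t => altSeq N ⌊t⌋) p‖ ^ 2 ≤ 8 := by
  simp only [whCoef_indicator_Icc_zero_two_comp_floor]
  set s : Finset (ℤ × ℤ) := {(0, -1), (0, (N : ℤ) - 1)} with hs
  have hvanish : ∀ p ∉ s,
      ‖if p.1 = 0 then altSeq N p.2 + altSeq N (p.2 + 1) else 0‖ ^ 2 = 0 := by
    rintro ⟨m, n⟩ hp
    split_ifs with hm
    · subst hm
      simp only [s, Finset.mem_insert, Finset.mem_singleton, Prod.mk.injEq, true_and,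
        not_or] at hp
      simp [altSeq_add_altSeq_add_one N hp.1 hp.2]
    · simp
  have hle : ∀ p : ℤ × ℤ,
      ‖if p.1 = 0 then altSeq N p.2 + altSeq N (p.2 + 1) else 0‖ ^ 2 ≤ 2 ^ 2 := by
    intro p
    have hsum : ‖altSeq N p.2 + altSeq N (p.2 + 1)‖ ≤ 2 :=
      (norm_add_le _ _).trans (by linarith [norm_altSeq_le N p.2, norm_altSeq_le N (p.2 + 1)])
    split_ifs
    · gcongr
    · norm_num
  calc _ = ∑ p ∈ s, _ := tsum_eq_sum hvanish
    _ ≤ s.card • 2 ^ 2 := Finset.sum_le_card_nsmul _ _ _ fun p _ => hle p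
    _ ≤ 2 • 2 ^ 2 := by gcongr; exact hs ▸ Finset.card_le_two
    _ = 8 := by norm_num

/-- `(χ_{[0,2]}, 1, 1)` is not a Weyl–Heisenberg frame for `L²(ℝ)`. -/
theorem chi02_not_whframe (h : ℝ → ℂ)
    (hdef : h = Set.indicator (Set.Icc (0 : ℝ) 2) (fun _ => (1 : ℂ))) :
    ¬ IsWHFrame h 1 1 := by
  subst hdef
  rintro ⟨A, B, -, hA, -, hframe⟩
  obtain ⟨N, hN⟩ := exists_nat_gt (8 / A)
  obtain ⟨-, hlower, -⟩ := hframe _ (memLp_altSeq_comp_floor N)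
  rw [integral_norm_sq_altSeq_comp_floor] at hlower
  have hupper := tsum_norm_sq_whCoef_altSeq_le N
  rw [div_lt_iff₀ hA] at hN
  linarith

end
end

section
/- If (g, a, b) is a Weyl–Heisenberg frame for L²(ℝ) with frame bounds A, B, then bA ≤ Σ_{n∈ℤ} |g(t−na)|² ≤ bB for a.e. t ∈ ℝ. -/
open MeasureTheory Set
open scoped ENNReal NNReal

noncomputable section

/-! Test the frame inequality on `f = 𝟙_E` for a set `E` inside an interval of length `1/b`.
On such an interval the modulations `E_{mb}` are the Fourier basis, so Parseval's identity gives
`∑_m |⟨𝟙_E, E_{mb} T_{na} g⟩|² = b⁻¹ ∫_E |g(t - na)|²`; summing over `n`, the frame bounds say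
that the mean of `G(t) = ∑_n |g(t - na)|²` over every such `E` lies in `[bA, bB]`. Lebesgue's
differentiation theorem, applied to small balls, carries these bounds over to almost every point. -/

open Complex Filter Metric
open scoped Topology ComplexConjugate

theorem hasSum_norm_sq_integral_fourier_smul {T : ℝ} [hT : Fact (0 < T)] {c : ℝ} {h : ℝ → ℂ}
    (hh : MemLp h 2 volume) (hsupp : ∀ t ∉ Ioc c (c + T), h t = 0) :
    HasSum (fun m : ℤ => ‖∫ t : ℝ, fourier (-m) (t : AddCircle T) • h t‖ ^ 2)
      (T * ∫ t, ‖h t‖ ^ 2) := by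
  have hcT : c < c + T := lt_add_of_pos_right c hT.out
  have hint {V : Type} [NormedAddCommGroup V] [NormedSpace ℝ V] (F : ℝ → V)
      (hF : ∀ t ∉ Ioc c (c + T), F t = 0) : ∫ t in c..c + T, F t = ∫ t, F t := by
    rw [intervalIntegral.integral_of_le hcT.le]
    exact setIntegral_eq_integral_of_forall_compl_eq_zero hF
  have hcoeff (m : ℤ) :
      fourierCoeffOn hcT h m = T⁻¹ • ∫ t : ℝ, fourier (-m) (t : AddCircle T) • h t := by
    rw [← fourierCoeff_liftIoc_eq, fourierCoeff_eq_intervalIntegral _ _ c, one_div,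
      ← hint _ fun t ht => by rw [hsupp t ht, smul_zero]]
    congr 1
    refine intervalIntegral.integral_congr_ae (ae_of_all _ fun t ht => ?_)
    rw [AddCircle.liftIoc_coe_apply (by rwa [uIoc_of_le hcT.le] at ht)]
  have hT2 : T ^ 2 * ‖T⁻¹‖ ^ 2 = 1 := by
    rw [norm_inv, Real.norm_of_nonneg hT.out.le, inv_pow,
      mul_inv_cancel₀ (pow_ne_zero 2 hT.out.ne')]
  have hP := (hasSum_sq_fourierCoeffOn hcT (hh.restrict _)).mul_left (T ^ 2)
  simp only [hcoeff, norm_smul, mul_pow, ← mul_assoc, hT2, one_mul, add_sub_cancel_left,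
    hint (fun t => ‖h t‖ ^ 2) fun t ht => by simp [hsupp t ht]] at hP
  rwa [smul_eq_mul, sq, mul_assoc, mul_inv_cancel_left₀ hT.out.ne'] at hP

theorem conj_exp_eq_fourier_coe (b : ℝ) (m : ℤ) (t : ℝ) :
    conj (Complex.exp (2 * (Real.pi : ℂ) * I * ((m : ℂ) * (b : ℂ)) * (t : ℂ))) =
      fourier (-m) (t : AddCircle b⁻¹) := by
  rw [fourier_coe_apply, ← Complex.exp_conj]
  congr 1
  simp only [map_mul, map_ofNat, conj_ofReal, conj_I, map_intCast, Int.cast_neg, ofReal_inv]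
  rw [div_inv_eq_mul]
  ring

theorem hasSum_norm_sq_whCoef_indicator {g : ℝ → ℂ} {a b c : ℝ} (hb : 0 < b)
    (hg : MemLp g 2 volume) {E : Set ℝ} (hE : MeasurableSet E) (hEc : E ⊆ Ioc c (c + b⁻¹))
    (n : ℤ) :
    HasSum (fun m : ℤ => ‖whCoef g a b (E.indicator fun _ => 1) (m, n)‖ ^ 2)
      (b⁻¹ * ∫ t in E, ‖g (t - n * a)‖ ^ 2) := by
  have : Fact (0 < b⁻¹) := ⟨inv_pos.2 hb⟩
  set h : ℝ → ℂ := E.indicator fun t => conj (g (t - n * a))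
  have hh : MemLp h 2 volume :=
    ((hg.comp_measurePreserving (measurePreserving_sub_right volume (n * a))).star).indicator hE
  have hcoef (m : ℤ) :
      whCoef g a b (E.indicator fun _ => 1) (m, n) =
        ∫ t : ℝ, fourier (-m) (t : AddCircle b⁻¹) • h t := by
    refine integral_congr_ae (ae_of_all _ fun t => ?_)
    by_cases ht : t ∈ E
    · simp only [h, indicator_of_mem ht, one_mul, gabor, map_mul,
        conj_exp_eq_fourier_coe, smul_eq_mul]
    · simp [h, ht]
  have hnorm : ∫ t, ‖h t‖ ^ 2 = ∫ t in E, ‖g (t - n * a)‖ ^ 2 := by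
    rw [← integral_indicator hE]
    congr 1 with t
    by_cases ht : t ∈ E <;> simp [h, ht]
  simpa only [hcoef, hnorm] using hasSum_norm_sq_integral_fourier_smul hh
    fun t ht => indicator_of_notMem (fun htE => ht (hEc htE)) _

theorem tsum_enorm_sq_eq_ofReal {ι F : Type*} [NormedAddCommGroup F] {f : ι → F} {s : ℝ}
    (hf : HasSum (fun i => ‖f i‖ ^ 2) s) : ∑' i, ‖f i‖ₑ ^ 2 = ENNReal.ofReal s := by
  rw [← hf.tsum_eq, ENNReal.ofReal_tsum_of_nonneg (fun _ => by positivity) hf.summable]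
  simp only [ENNReal.ofReal_pow (norm_nonneg _), ofReal_norm]

theorem tsum_norm_sq_eq_toReal_tsum_enorm_sq {ι F : Type*} [NormedAddCommGroup F] (f : ι → F) :
    ∑' i, ‖f i‖ ^ 2 = (∑' i, ‖f i‖ₑ ^ 2).toReal := by
  rw [ENNReal.tsum_toReal_eq fun i => by finiteness]
  simp only [ENNReal.toReal_pow, toReal_enorm]

theorem MeasureTheory.MemLp.ofReal_integral_norm_sq {α E : Type*} [MeasurableSpace α]
    {μ : Measure α} [NormedAddCommGroup E] {f : α → E} (hf : MemLp f 2 μ) :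
    ENNReal.ofReal (∫ x, ‖f x‖ ^ 2 ∂μ) = ∫⁻ x, ‖f x‖ₑ ^ 2 ∂μ := by
  rw [ofReal_integral_eq_lintegral_ofReal (hf.integrable_norm_pow two_ne_zero)
    (ae_of_all _ fun x => by positivity)]
  simp only [ENNReal.ofReal_pow (norm_nonneg _), ofReal_norm]

theorem lintegral_tsum_enorm_sq_eq_tsum_whCoef {g : ℝ → ℂ} {a b c : ℝ} (hb : 0 < b)
    (hg : MemLp g 2 volume) {E : Set ℝ} (hE : MeasurableSet E) (hEc : E ⊆ Ioc c (c + b⁻¹)) :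
    ∫⁻ t in E, ∑' n : ℤ, ‖g (t - n * a)‖ₑ ^ 2 =
      ENNReal.ofReal b * ∑' p : ℤ × ℤ, ‖whCoef g a b (E.indicator fun _ => 1) p‖ₑ ^ 2 := by
  have hgn (n : ℤ) : MemLp (fun t => g (t - n * a)) 2 volume :=
    hg.comp_measurePreserving (measurePreserving_sub_right volume (n * a))
  rw [lintegral_tsum fun n => (hgn n).1.enorm.pow_const 2 |>.restrict, ENNReal.tsum_prod',
    ENNReal.tsum_comm, ← ENNReal.tsum_mul_left]
  refine tsum_congr fun n => ?_
  rw [tsum_enorm_sq_eq_ofReal (hasSum_norm_sq_whCoef_indicator hb hg hE hEc n),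
    ← ENNReal.ofReal_mul hb.le, mul_inv_cancel_left₀ hb.ne',
    ((hgn n).restrict E).ofReal_integral_norm_sq]

theorem IsWHFrameWith.tsum_norm_sq_whCoef_indicator_mem_Icc {g : ℝ → ℂ} {a b A B : ℝ}
    (hg : IsWHFrameWith g a b A B) {E : Set ℝ} (hE : MeasurableSet E) (hEfin : volume E ≠ ⊤) :
    Summable (fun p => ‖whCoef g a b (E.indicator fun _ => 1) p‖ ^ 2) ∧
      ∑' p, ‖whCoef g a b (E.indicator fun _ => 1) p‖ ^ 2 ∈
        Icc (A * volume.real E) (B * volume.real E) := by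
  have hnorm : ∫ t, ‖E.indicator (fun _ => (1 : ℂ)) t‖ ^ 2 = volume.real E := by
    rw [← integral_indicator_one hE]
    congr 1 with t
    by_cases ht : t ∈ E <;> simp [ht]
  obtain ⟨hsum, hlow, hupp⟩ := hg.2.2.2 _ (memLp_indicator_const 2 hE (1 : ℂ) (Or.inr hEfin))
  rw [hnorm] at hlow hupp
  exact ⟨hsum, hlow, hupp⟩

theorem IsWHFrameWith.setAverage_tsum_norm_sq_mem_Icc {g : ℝ → ℂ} {a b A B c : ℝ}
    (hg : IsWHFrameWith g a b A B) (hb : 0 < b) {E : Set ℝ} (hE : MeasurableSet E)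
    (hE0 : volume E ≠ 0) (hEc : E ⊆ Ioc c (c + b⁻¹)) :
    IntegrableOn (fun t => ∑' n : ℤ, ‖g (t - n * a)‖ ^ 2) E ∧
      ⨍ t in E, ∑' n : ℤ, ‖g (t - n * a)‖ ^ 2 ∈ Icc (b * A) (b * B) := by
  have hEfin : volume E ≠ ⊤ := ((measure_mono hEc).trans_lt measure_Ioc_lt_top).ne
  obtain ⟨hsum, hlow, hupp⟩ := hg.tsum_norm_sq_whCoef_indicator_mem_Icc hE hEfin
  set S := ∑' p, ‖whCoef g a b (E.indicator fun _ => 1) p‖ ^ 2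
  -- In `ℝ≥0∞` the sum over `n` can be integrated termwise with no summability hypothesis.
  have hΦmeas : AEMeasurable (fun t => ∑' n : ℤ, ‖g (t - n * a)‖ₑ ^ 2) (volume.restrict E) :=
    AEMeasurable.tsum fun n =>
      ((hg.1.comp_measurePreserving (measurePreserving_sub_right volume (n * a))).1.enorm.pow_const
        2).restrict
  have hΦ : ∫⁻ t in E, ∑' n : ℤ, ‖g (t - n * a)‖ₑ ^ 2 = ENNReal.ofReal (b * S) := by
    rw [lintegral_tsum_enorm_sq_eq_tsum_whCoef hb hg.1 hE hEc,
      tsum_enorm_sq_eq_ofReal hsum.hasSum, ENNReal.ofReal_mul hb.le]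
  have hfin : ∫⁻ t in E, ∑' n : ℤ, ‖g (t - n * a)‖ₑ ^ 2 ≠ ⊤ := hΦ ▸ ENNReal.ofReal_ne_top
  simp only [tsum_norm_sq_eq_toReal_tsum_enorm_sq]
  refine ⟨integrable_toReal_of_lintegral_ne_top hΦmeas hfin, ?_⟩
  have hvol : 0 < volume.real E := ENNReal.toReal_pos hE0 hEfin
  rw [setAverage_eq, integral_toReal hΦmeas (ae_lt_top' hΦmeas hfin), hΦ,
    ENNReal.toReal_ofReal (by positivity), smul_eq_mul]
  constructor
  · rw [le_inv_mul_iff₀ hvol]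
    nlinarith [mul_le_mul_of_nonneg_left hlow hb.le]
  · rw [inv_mul_le_iff₀ hvol]
    nlinarith [mul_le_mul_of_nonneg_left hupp hb.le]

theorem ae_mem_of_eventually_setAverage_closedBall_mem {α F : Type*} [MetricSpace α]
    [MeasurableSpace α] [BorelSpace α] [SecondCountableTopology α] [HasBesicovitchCovering α]
    {μ : Measure α} [IsLocallyFiniteMeasure μ] [NormedAddCommGroup F] [NormedSpace ℝ F]
    [CompleteSpace F] {f : α → F} (hf : LocallyIntegrable f μ) {s : Set F} (hs : IsClosed s)
    (h : ∀ x, ∀ᶠ r in 𝓝[>] 0, ⨍ y in closedBall x r, f y ∂μ ∈ s) :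
    ∀ᵐ x ∂μ, f x ∈ s := by
  filter_upwards [(Besicovitch.vitaliFamily μ).ae_tendsto_average hf] with x hx
  exact hs.mem_of_tendsto (hx.comp (Besicovitch.tendsto_filterAt μ x)) (h x)

theorem whframe_pointwise_bounds_general (g : ℝ → ℂ) (a b A B : ℝ) (hb : 0 < b)
    (hg : IsWHFrameWith g a b A B) :
    ∀ᵐ t : ℝ, b * A ≤ (∑' n : ℤ, ‖g (t - (n : ℝ) * a)‖ ^ 2) ∧
      (∑' n : ℤ, ‖g (t - (n : ℝ) * a)‖ ^ 2) ≤ b * B := by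
  have hball (x : ℝ) {r : ℝ} (hr : r ∈ Ioo 0 (b⁻¹ / 2)) :=
    hg.setAverage_tsum_norm_sq_mem_Icc (E := closedBall x r) hb measurableSet_closedBall
      (by simpa [Real.volume_closedBall] using hr.1)
      (c := x - b⁻¹ / 2) fun t ht => by
        rw [Real.closedBall_eq_Icc] at ht
        constructor <;> linarith [ht.1, ht.2, hr.2]
  have hloc : LocallyIntegrable (fun t => ∑' n : ℤ, ‖g (t - n * a)‖ ^ 2) := fun x =>
    ⟨closedBall x (b⁻¹ / 4), closedBall_mem_nhds x (by positivity),
      (hball x ⟨by positivity, by linarith [inv_pos.2 hb]⟩).1⟩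
  exact ae_mem_of_eventually_setAverage_closedBall_mem hloc isClosed_Icc fun x =>
    eventually_mem_set.2 (Ioo_mem_nhdsGT (by positivity)) |>.mono fun r hr => (hball x hr).2

/-- If `(g,a,b)` is a WH-frame with frame bounds `A, B`, then
`bA ≤ ∑_n |g(t-na)|² ≤ bB` for a.e. `t`. -/
theorem whframe_pointwise_bounds (g : ℝ → ℂ) (a b A B : ℝ) (ha : 0 < a) (hb : 0 < b)
    (hg : IsWHFrameWith g a b A B) :
    ∀ᵐ t : ℝ, b * A ≤ (∑' n : ℤ, ‖g (t - (n : ℝ) * a)‖ ^ 2) ∧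
      (∑' n : ℤ, ‖g (t - (n : ℝ) * a)‖ ^ 2) ≤ b * B :=
  whframe_pointwise_bounds_general g a b A B hb hg

end
end
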